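/- Let n ≥ 2 and let x_1 ≤ ⋯ ≤ x_n be real numbers. Let z_1 ≤ ⋯ ≤ z_{n−1} be real numbers with Φ(z_i) = i/n for i = 1, …, n−1. Set l := Σ_{i=1}^{n−1} (x_{i+1} − x_i) φ(z_i) and σ_μ := √((1/n) Σ_{i=1}^{n} x_i²). Then 0 ≤ l ≤ σ_μ; in particular the relative Wasserstein angle θ = arccos(l/σ_μ) is well-defined and lies in [0, π/2] whenever σ_μ > 0. -/

import Mathlib

open MeasureTheory

/-- The standard normal density `φ(z) = (2π)^{-1/2} exp(-z²/2)`. -/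
noncomputable def stdGaussianPDF (z : ℝ) : ℝ :=
  (Real.sqrt (2 * Real.pi))⁻¹ * Real.exp (-z ^ 2 / 2)

/-- The standard normal cumulative distribution function `Φ(t) = ∫_{-∞}^t φ(z) dz`. -/
noncomputable def stdGaussianCDF (t : ℝ) : ℝ :=
  ∫ z in Set.Iic t, stdGaussianPDF z


/-!
Put `z₀ = -∞`, `zₙ = +∞` and `Iₖ = (zₖ₋₁, zₖ]`, so that each cell `Iₖ` has Gaussian mass `1/n`.
Since `-φ` is an antiderivative of `t φ(t)`, `∫_{Iₖ} t φ = φ(zₖ₋₁) - φ(zₖ)`, and summation by parts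
turns `l` into `Σₖ xₖ ∫_{Iₖ} t φ`. Cauchy–Schwarz on each cell gives
`(∫_{Iₖ} t φ)² ≤ (1/n) ∫_{Iₖ} t² φ`; as the standard Gaussian has second moment `1`, these squares
sum to at most `1/n`, and the discrete Cauchy–Schwarz inequality yields `l² ≤ (1/n) Σ xₖ² = σ_μ²`.
-/

open Real Filter Finset ProbabilityTheory

lemma stdGaussianPDF_eq_gaussianPDFReal : stdGaussianPDF = gaussianPDFReal 0 1 := by
  ext t
  simp [stdGaussianPDF, gaussianPDFReal]

lemma stdGaussianPDF_nonneg (t : ℝ) : 0 ≤ stdGaussianPDF t := by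
  rw [stdGaussianPDF_eq_gaussianPDFReal]
  exact gaussianPDFReal_nonneg 0 1 t

lemma integrable_pow_mul_stdGaussianPDF (k : ℕ) :
    Integrable (fun t => t ^ k * stdGaussianPDF t) := by
  refine ((integrable_rpow_mul_exp_neg_mul_sq (b := 1 / 2) (by norm_num) (s := k)
    (by linarith [k.cast_nonneg (α := ℝ)])).const_mul (√(2 * π))⁻¹).congr (ae_of_all _ fun t => ?_)
  simp only [stdGaussianPDF, rpow_natCast]
  ring_nf

lemma integrable_stdGaussianPDF : Integrable stdGaussianPDF := by
  simpa using integrable_pow_mul_stdGaussianPDF 0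

lemma integrable_mul_stdGaussianPDF : Integrable (fun t => t * stdGaussianPDF t) := by
  simpa using integrable_pow_mul_stdGaussianPDF 1

lemma integral_stdGaussianPDF : ∫ t, stdGaussianPDF t = 1 := by
  rw [stdGaussianPDF_eq_gaussianPDFReal]
  exact integral_gaussianPDFReal_eq_one 0 one_ne_zero

lemma integral_mul_stdGaussianPDF : ∫ t, t * stdGaussianPDF t = 0 := by
  simpa [stdGaussianPDF_eq_gaussianPDFReal, mul_comm] using
    (integral_gaussianReal_eq_integral_smul (μ := 0) (f := id) one_ne_zero).symm.trans
      integral_id_gaussianReal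

lemma integral_sq_mul_stdGaussianPDF : ∫ t, t ^ 2 * stdGaussianPDF t = 1 := by
  have h := variance_of_integral_eq_zero (X := id) (μ := gaussianReal 0 1) aemeasurable_id
    integral_id_gaussianReal
  rw [variance_id_gaussianReal, integral_gaussianReal_eq_integral_smul one_ne_zero] at h
  simpa [stdGaussianPDF_eq_gaussianPDFReal, mul_comm] using h.symm

lemma tendsto_stdGaussianPDF_atBot : Tendsto stdGaussianPDF atBot (nhds 0) := by
  have hsq : Tendsto (fun t : ℝ => -t ^ 2 / 2) atBot atBot := by
    have hpow : Tendsto (fun t : ℝ => t ^ 2) atBot atTop := by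
      simpa only [sq, id] using tendsto_id.atBot_mul_atBot₀ tendsto_id
    exact (tendsto_neg_atTop_atBot.comp hpow).atBot_div_const two_pos
  have h := (tendsto_exp_atBot.comp hsq).const_mul (√(2 * π))⁻¹
  rwa [mul_zero] at h

lemma hasDerivAt_neg_stdGaussianPDF (t : ℝ) :
    HasDerivAt (fun s => -stdGaussianPDF s) (t * stdGaussianPDF t) t := by
  have h : HasDerivAt (fun s : ℝ => -s ^ 2 / 2) (-t) t := by
    refine ((hasDerivAt_pow 2 t).fun_neg.div_const 2).congr_deriv ?_
    push_cast; ring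
  refine ((h.exp.const_mul (√(2 * π))⁻¹).fun_neg).congr_deriv ?_
  simp only [stdGaussianPDF]; ring

lemma setIntegral_Iic_mul_stdGaussianPDF (a : ℝ) :
    ∫ t in Set.Iic a, t * stdGaussianPDF t = -stdGaussianPDF a := by
  simpa using integral_Iic_of_hasDerivAt_of_tendsto' (fun t _ => hasDerivAt_neg_stdGaussianPDF t)
    integrable_mul_stdGaussianPDF.integrableOn tendsto_stdGaussianPDF_atBot.neg

lemma sq_integral_mul_le_integral_mul_integral_sq_mul {α : Type*} [MeasurableSpace α]
    {μ : Measure α} {f w : α → ℝ} (hw : 0 ≤ w) (hw_int : Integrable w μ)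
    (hfw : Integrable (fun a => f a * w a) μ) (hf2w : Integrable (fun a => f a ^ 2 * w a) μ) :
    (∫ a, f a * w a ∂μ) ^ 2 ≤ (∫ a, w a ∂μ) * ∫ a, f a ^ 2 * w a ∂μ := by
  have hquad : ∀ r : ℝ, 0 ≤ (∫ a, w a ∂μ) * (r * r) + (-2 * ∫ a, f a * w a ∂μ) * r +
      ∫ a, f a ^ 2 * w a ∂μ := by
    intro r
    have hexpand : ∫ a, (f a - r) ^ 2 * w a ∂μ = ∫ a, f a ^ 2 * w a ∂μ
        - 2 * r * ∫ a, f a * w a ∂μ + r ^ 2 * ∫ a, w a ∂μ := by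
      have hsplit : (fun a => (f a - r) ^ 2 * w a) =
          fun a => (f a ^ 2 * w a - 2 * r * (f a * w a)) + r ^ 2 * w a := by
        ext a; ring
      rw [hsplit, integral_add (f := fun a => f a ^ 2 * w a - 2 * r * (f a * w a))
        (hf2w.sub (hfw.const_mul _)) (hw_int.const_mul _),
        integral_sub hf2w (hfw.const_mul _), integral_const_mul, integral_const_mul]
    have := integral_nonneg (μ := μ) (f := fun a => (f a - r) ^ 2 * w a)
      fun a => mul_nonneg (sq_nonneg (f a - r)) (hw a)
    linarith
  have := discrim_le_zero hquad
  rw [discrim] at this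
  linarith

lemma sum_range_succ_eq_sum_Icc {M : Type*} [AddCommMonoid M] (f : ℕ → M) (n : ℕ) :
    ∑ k ∈ range n, f (k + 1) = ∑ i ∈ Icc 1 n, f i := by
  rw [range_eq_Ico, sum_Ico_add', zero_add, Ico_add_one_right_eq_Icc]

lemma sum_Icc_sub_mul_eq_sum_range_mul_sub (x W : ℕ → ℝ) {n : ℕ} (hW0 : W 0 = 0)
    (hWn : W n = 0) :
    ∑ i ∈ Icc 1 (n - 1), (x (i + 1) - x i) * W i =
      ∑ k ∈ range n, x (k + 1) * (W k - W (k + 1)) := by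
  have hdrop : ∑ i ∈ Icc 1 (n - 1), (x (i + 1) - x i) * W i =
      ∑ k ∈ range n, (x (k + 1) - x k) * W k := by
    refine sum_subset (fun i hi => ?_) (fun k hk hk' => ?_)
    · rw [mem_Icc] at hi
      exact mem_range.2 (by omega)
    · obtain rfl : k = 0 := by rw [mem_range] at hk; rw [mem_Icc] at hk'; omega
      simp [hW0]
  have htele : ∑ k ∈ range n, (x (k + 1) * W (k + 1) - x k * W k) = 0 := by
    rw [sum_range_sub (fun k => x k * W k)]
    simp [hW0, hWn]
  rw [hdrop, ← sub_zero (∑ k ∈ range n, (x (k + 1) - x k) * W k), ← htele, ← sum_sub_distrib]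
  exact sum_congr rfl fun k _ => by ring

/-- The half-line `(-∞, z k]`, with the conventions `z 0 = -∞` and `z n = +∞`. -/
def quantileIic (n : ℕ) (z : ℕ → ℝ) (k : ℕ) : Set ℝ :=
  if k = 0 then ∅ else if k < n then Set.Iic (z k) else Set.univ

section QuantileIic

variable {n : ℕ} {z : ℕ → ℝ}

lemma measurableSet_quantileIic (k : ℕ) : MeasurableSet (quantileIic n z k) := by
  unfold quantileIic
  split_ifs <;> simp

lemma quantileIic_subset_succ (hzmono : ∀ i, 1 ≤ i → i + 1 ≤ n - 1 → z i ≤ z (i + 1)) (k : ℕ) :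
    quantileIic n z k ⊆ quantileIic n z (k + 1) := by
  rcases Nat.eq_zero_or_pos k with rfl | hk0
  · simp [quantileIic]
  by_cases hk1 : k + 1 < n
  · simp [quantileIic, hk0.ne', hk1, show k < n by omega, hzmono k hk0 (by omega)]
  · simp [quantileIic, hk1]

lemma setIntegral_quantileIic_succ_sdiff (hzmono : ∀ i, 1 ≤ i → i + 1 ≤ n - 1 → z i ≤ z (i + 1))
    {f : ℝ → ℝ} (hf : Integrable f) (k : ℕ) :
    ∫ t in quantileIic n z (k + 1) \ quantileIic n z k, f t =
      (∫ t in quantileIic n z (k + 1), f t) - ∫ t in quantileIic n z k, f t :=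
  setIntegral_sdiff (measurableSet_quantileIic k) hf.integrableOn (quantileIic_subset_succ hzmono k)

lemma setIntegral_quantileIic_stdGaussianPDF
    (hΦ : ∀ i, 1 ≤ i → i ≤ n - 1 → stdGaussianCDF (z i) = (i : ℝ) / n) {k : ℕ} (hk : k ≤ n) :
    ∫ t in quantileIic n z k, stdGaussianPDF t = k / n := by
  unfold quantileIic
  split_ifs with h0 hkn
  · simp [h0]
  · exact hΦ k (by omega) (by omega)
  · obtain rfl : k = n := by omega
    rw [setIntegral_univ, integral_stdGaussianPDF, div_self (by exact_mod_cast h0)]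

lemma setIntegral_quantileIic_mul_stdGaussianPDF (k : ℕ) :
    ∫ t in quantileIic n z k, t * stdGaussianPDF t =
      if k = 0 then 0 else if k < n then -stdGaussianPDF (z k) else 0 := by
  unfold quantileIic
  split_ifs <;> simp [setIntegral_Iic_mul_stdGaussianPDF, integral_mul_stdGaussianPDF]

lemma sum_sub_mul_stdGaussianPDF_eq_sum_mul_setIntegral
    (hzmono : ∀ i, 1 ≤ i → i + 1 ≤ n - 1 → z i ≤ z (i + 1)) (x : ℕ → ℝ) :
    ∑ i ∈ Icc 1 (n - 1), (x (i + 1) - x i) * stdGaussianPDF (z i) =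
      ∑ k ∈ range n, x (k + 1) *
        ∫ t in quantileIic n z (k + 1) \ quantileIic n z k, t * stdGaussianPDF t := by
  set W : ℕ → ℝ := fun k => -∫ t in quantileIic n z k, t * stdGaussianPDF t
  have hW : ∀ i ∈ Icc 1 (n - 1), stdGaussianPDF (z i) = W i := by
    intro i hi
    rw [mem_Icc] at hi
    simp [W, setIntegral_quantileIic_mul_stdGaussianPDF, show i ≠ 0 by omega,
      show i < n by omega]
  rw [sum_congr rfl fun i hi => by rw [hW i hi],
    sum_Icc_sub_mul_eq_sum_range_mul_sub x W
      (by simp [W, setIntegral_quantileIic_mul_stdGaussianPDF])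
      (by simp [W, setIntegral_quantileIic_mul_stdGaussianPDF])]
  refine sum_congr rfl fun k _ => ?_
  rw [setIntegral_quantileIic_succ_sdiff hzmono integrable_mul_stdGaussianPDF]
  ring

lemma sum_sq_setIntegral_mul_stdGaussianPDF_le
    (hzmono : ∀ i, 1 ≤ i → i + 1 ≤ n - 1 → z i ≤ z (i + 1))
    (hΦ : ∀ i, 1 ≤ i → i ≤ n - 1 → stdGaussianCDF (z i) = (i : ℝ) / n) :
    ∑ k ∈ range n,
      (∫ t in quantileIic n z (k + 1) \ quantileIic n z k, t * stdGaussianPDF t) ^ 2 ≤ 1 / n := by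
  rcases n.eq_zero_or_pos with rfl | hn
  · simp
  set M : ℕ → ℝ := fun k => ∫ t in quantileIic n z k, t ^ 2 * stdGaussianPDF t
  have hcell : ∀ k < n,
      (∫ t in quantileIic n z (k + 1) \ quantileIic n z k, t * stdGaussianPDF t) ^ 2 ≤
        1 / n * (M (k + 1) - M k) := by
    intro k hk
    have h := sq_integral_mul_le_integral_mul_integral_sq_mul
      (μ := volume.restrict (quantileIic n z (k + 1) \ quantileIic n z k)) (f := fun t => t)
      stdGaussianPDF_nonneg integrable_stdGaussianPDF.integrableOn
      integrable_mul_stdGaussianPDF.integrableOn (integrable_pow_mul_stdGaussianPDF 2).integrableOn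
    rw [setIntegral_quantileIic_succ_sdiff hzmono integrable_stdGaussianPDF,
      setIntegral_quantileIic_stdGaussianPDF hΦ hk, setIntegral_quantileIic_stdGaussianPDF hΦ hk.le,
      setIntegral_quantileIic_succ_sdiff hzmono (integrable_pow_mul_stdGaussianPDF 2)] at h
    convert h using 2
    push_cast
    ring
  calc _ ≤ ∑ k ∈ range n, 1 / n * (M (k + 1) - M k) :=
        sum_le_sum fun k hk => hcell k (mem_range.1 hk)
    _ = 1 / n * (M n - M 0) := by rw [← mul_sum, sum_range_sub]
    _ = 1 / n := by simp [M, quantileIic, hn.ne', integral_sq_mul_stdGaussianPDF]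

end QuantileIic

theorem projection_length_nonneg_le_scale_general
    (n : ℕ) (x : ℕ → ℝ)
    (hxmono : ∀ i, 1 ≤ i → i < n → x i ≤ x (i + 1))
    (z : ℕ → ℝ)
    (hzmono : ∀ i, 1 ≤ i → i + 1 ≤ n - 1 → z i ≤ z (i + 1))
    (hz : ∀ i, 1 ≤ i → i ≤ n - 1 → stdGaussianCDF (z i) = (i : ℝ) / n)
    (l : ℝ) (hl : l = ∑ i ∈ Finset.Icc 1 (n - 1), (x (i + 1) - x i) * stdGaussianPDF (z i))
    (σμ : ℝ) (hσμ : σμ = Real.sqrt ((1 / (n : ℝ)) * ∑ i ∈ Finset.Icc 1 n, (x i) ^ 2)) :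
    0 ≤ l ∧ l ≤ σμ
      ∧ (0 < σμ → Real.arccos (l / σμ) ∈ Set.Icc 0 (Real.pi / 2)) := by
  have hl_nonneg : 0 ≤ l := hl ▸ sum_nonneg fun i hi => by
    rw [mem_Icc] at hi
    exact mul_nonneg (sub_nonneg.2 (hxmono i hi.1 (by omega))) (stdGaussianPDF_nonneg _)
  have hl_sq : l ^ 2 ≤ 1 / n * ∑ i ∈ Icc 1 n, x i ^ 2 := by
    rw [hl, sum_sub_mul_stdGaussianPDF_eq_sum_mul_setIntegral hzmono, ← sum_range_succ_eq_sum_Icc]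
    calc _ ≤ (∑ k ∈ range n, x (k + 1) ^ 2) * ∑ k ∈ range n,
          (∫ t in quantileIic n z (k + 1) \ quantileIic n z k, t * stdGaussianPDF t) ^ 2 :=
          sum_mul_sq_le_sq_mul_sq _ _ _
      _ ≤ (∑ k ∈ range n, x (k + 1) ^ 2) * (1 / n) :=
          mul_le_mul_of_nonneg_left (sum_sq_setIntegral_mul_stdGaussianPDF_le hzmono hz)
            (sum_nonneg fun _ _ => sq_nonneg _)
      _ = _ := mul_comm _ _
  refine ⟨hl_nonneg, hσμ ▸ (le_abs_self l).trans (abs_le_sqrt hl_sq), fun hσ => ?_⟩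
  exact ⟨arccos_nonneg _, arccos_le_pi_div_two.2 (div_nonneg hl_nonneg hσ.le)⟩

/-- For sorted reals `x 1 ≤ ⋯ ≤ x n`, Gaussian quantiles
`z 1 ≤ ⋯ ≤ z (n-1)` with `Φ (z i) = i/n`, projection length
`l = Σ (x (i+1) - x i) φ(z i)` and scale `σ_μ = √((1/n) Σ (x i)²)`, one has
`0 ≤ l ≤ σ_μ`; in particular, whenever `σ_μ > 0`, the relative Wasserstein angle
`θ = arccos (l / σ_μ)` lies in `[0, π/2]`. -/
theorem projection_length_nonneg_le_scale
    (n : ℕ) (hn : 2 ≤ n) (x : ℕ → ℝ)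
    (hxmono : ∀ i, 1 ≤ i → i < n → x i ≤ x (i + 1))
    (z : ℕ → ℝ)
    (hzmono : ∀ i, 1 ≤ i → i + 1 ≤ n - 1 → z i ≤ z (i + 1))
    (hz : ∀ i, 1 ≤ i → i ≤ n - 1 → stdGaussianCDF (z i) = (i : ℝ) / n)
    (l : ℝ) (hl : l = ∑ i ∈ Finset.Icc 1 (n - 1), (x (i + 1) - x i) * stdGaussianPDF (z i))
    (σμ : ℝ) (hσμ : σμ = Real.sqrt ((1 / (n : ℝ)) * ∑ i ∈ Finset.Icc 1 n, (x i) ^ 2)) :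
    0 ≤ l ∧ l ≤ σμ
      ∧ (0 < σμ → Real.arccos (l / σμ) ∈ Set.Icc 0 (Real.pi / 2)) :=
  projection_length_nonneg_le_scale_general n x hxmono z hzmono hz l hl σμ hσμ
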